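/- Let q be a real number with q > 0 and q ≠ 1. Then for all integers n ≥ 1 and N ≥ 1, n · Σ_{k=0}^{N−1} q^{2k} · [k]^{n−1} + (q−1) · Σ_{k=0}^{N−1} q^k · [k]^n = q^N · β_n(N) − β_n(0). -/

import Mathlib

open Finset

/-- The q-bracket: `[x] = (q^x - 1)/(q - 1)`. -/
noncomputable def qb (q x : ℝ) : ℝ := (q ^ x - 1) / (q - 1)

/-- The Carlitz q-Bernoulli polynomials `β_n(x)`. -/
noncomputable def carlitzBeta (q : ℝ) (n : ℕ) (x : ℝ) : ℝ :=
  ((q - 1) ^ n)⁻¹ *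
    ∑ k ∈ range (n + 1),
      (-1 : ℝ) ^ (n - k) * (n.choose k : ℝ) *
        (((k : ℝ) + 1) / qb q ((k : ℝ) + 1)) * q ^ ((k : ℝ) * x)

/-!
Put `t = q ^ k`. In `q ^ (k + 1) * β_n(k + 1) - q ^ k * β_n(k)` the `j`-th term acquires the factor
`q ^ (j + 1) - 1`, which cancels the denominator of `(j + 1) / [j + 1]`. What remains is
`(q - 1) * t * ∑ j, (-1) ^ (n - j) * n.choose j * (j + 1) * t ^ j`, and this sum is the derivative
of `t * (t - 1) ^ n`; with `[k] = (t - 1) / (q - 1)` it is the `k`-th summand of the left-hand side.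
Summing over `k < N` telescopes.
-/

theorem sub_one_pow_eq_sum {R : Type*} [CommRing R] (t : R) (n : ℕ) :
    (t - 1) ^ n = ∑ j ∈ range (n + 1), (-1) ^ (n - j) * (n.choose j : R) * t ^ j := by
  rw [sub_pow]
  refine sum_congr rfl fun j hj => ?_
  obtain ⟨i, rfl⟩ := Nat.exists_eq_add_of_le (Nat.lt_succ_iff.mp (mem_range.mp hj))
  rw [show j + (j + i) = i + 2 * j by ring, pow_add, pow_mul, Nat.add_sub_cancel_left]
  simp only [neg_one_sq, one_pow, mul_one]
  ring

-- Differentiate `t * (t - 1) ^ n = ∑ j, (-1) ^ (n - j) * n.choose j * t ^ (j + 1)`.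
open Polynomial in
theorem sum_neg_one_pow_mul_choose_mul_succ_mul_pow {R : Type*} [CommRing R] (t : R) (n : ℕ) :
    ∑ j ∈ range (n + 1), (-1) ^ (n - j) * (n.choose j : R) * ((j : R) + 1) * t ^ j
      = (t - 1) ^ n + n * t * (t - 1) ^ (n - 1) := by
  have h : (X : R[X]) * (X - 1) ^ n
      = ∑ j ∈ range (n + 1), C ((-1) ^ (n - j) * (n.choose j : R)) * X ^ (j + 1) := by
    rw [sub_one_pow_eq_sum, mul_sum]
    refine sum_congr rfl fun j _ => ?_
    simp only [map_mul, map_pow, map_neg, map_one, map_natCast]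
    ring
  have h' := congrArg (fun p => eval t (derivative p)) h
  simp only [derivative_sum, derivative_mul, derivative_X, derivative_pow, derivative_sub,
    derivative_one, derivative_C, eval_finsetSum, eval_mul, eval_C, eval_add,
    eval_pow, eval_X, eval_sub, eval_one, zero_mul, zero_add, one_mul,
    sub_zero, mul_one, Nat.add_sub_cancel] at h'
  rw [show (n : R) * t * (t - 1) ^ (n - 1) = t * (n * (t - 1) ^ (n - 1)) by ring, h']
  refine sum_congr rfl fun j _ => ?_
  push_cast
  ring

theorem qb_natCast (q : ℝ) (k : ℕ) : qb q k = (q ^ k - 1) / (q - 1) := by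
  rw [qb, Real.rpow_natCast]

theorem carlitzBeta_natCast (q : ℝ) (n k : ℕ) :
    carlitzBeta q n k = ((q - 1) ^ n)⁻¹ * ∑ j ∈ range (n + 1),
      (-1) ^ (n - j) * (n.choose j : ℝ) * (((j : ℝ) + 1) * (q - 1) / (q ^ (j + 1) - 1)) *
        (q ^ k) ^ j := by
  refine congrArg _ (sum_congr rfl fun j _ => ?_)
  rw [← Nat.cast_succ, qb_natCast, ← Nat.cast_mul, Real.rpow_natCast, mul_comm j, pow_mul,
    div_div_eq_mul_div]

theorem pow_mul_carlitzBeta_succ_sub {q : ℝ} (hq : 0 < q) (hq1 : q ≠ 1) (n k : ℕ) :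
    q ^ (k + 1) * carlitzBeta q n (k + 1 : ℕ) - q ^ k * carlitzBeta q n k
      = n * (q ^ (2 * k) * qb q k ^ (n - 1)) + (q - 1) * (q ^ k * qb q k ^ n) := by
  rw [carlitzBeta_natCast, carlitzBeta_natCast, qb_natCast, pow_mul', sq, pow_succ']
  set t := q ^ k
  have hterm : ∀ j ∈ range (n + 1),
      q * t * ((-1) ^ (n - j) * (n.choose j : ℝ) *
          (((j : ℝ) + 1) * (q - 1) / (q ^ (j + 1) - 1)) * (q * t) ^ j)
        - t * ((-1) ^ (n - j) * (n.choose j : ℝ) *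
          (((j : ℝ) + 1) * (q - 1) / (q ^ (j + 1) - 1)) * t ^ j)
      = (q - 1) * t * ((-1) ^ (n - j) * (n.choose j : ℝ) * ((j : ℝ) + 1) * t ^ j) := by
    intro j _
    have : q ^ (j + 1) - 1 ≠ 0 :=
      sub_ne_zero.mpr ((pow_eq_one_iff_of_nonneg hq.le j.succ_ne_zero).not.mpr hq1)
    field_simp
    ring
  calc _ = ((q - 1) ^ n)⁻¹ * ((q - 1) * t * ∑ j ∈ range (n + 1),
          (-1) ^ (n - j) * (n.choose j : ℝ) * ((j : ℝ) + 1) * t ^ j) := by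
        rw [mul_left_comm (q * t), mul_left_comm t, ← mul_sub, mul_sum, mul_sum,
          ← sum_sub_distrib, sum_congr rfl hterm, ← mul_sum]
    _ = ((q - 1) ^ n)⁻¹ * ((q - 1) * t * ((t - 1) ^ n + n * t * (t - 1) ^ (n - 1))) := by
        rw [sum_neg_one_pow_mul_choose_mul_succ_mul_pow]
    _ = _ := by
        rcases n with _ | m
        · simp
        · rw [Nat.add_sub_cancel, div_pow, div_pow]
          field_simp
          ring

theorem q_power_sum_via_beta (q : ℝ) (hq : 0 < q) (hq1 : q ≠ 1) :
    ∀ n N : ℕ, 1 ≤ n → 1 ≤ N →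
      (n : ℝ) * ∑ k ∈ range N, q ^ (2 * k) * (qb q k) ^ (n - 1)
        + (q - 1) * ∑ k ∈ range N, q ^ k * (qb q k) ^ n
        = q ^ N * carlitzBeta q n (N : ℝ) - carlitzBeta q n 0 := by
  intro n N _ _
  rw [mul_sum, mul_sum, ← sum_add_distrib]
  simp_rw [← pow_mul_carlitzBeta_succ_sub hq hq1]
  rw [sum_range_sub (fun k => q ^ k * carlitzBeta q n k), pow_zero, one_mul, Nat.cast_zero]
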